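/- Let μ > 0 be a non-integer real number, let p ∈ V_μ, and set C_μ = min{μ−⌊μ⌋, ⌊μ⌋+1−μ}. Then μ (G[p] − G[p*]) ≥ C_μ · ( ∑_{n ≤ ⌊μ⌋} (⌊μ⌋+1−n) p_n − (⌊μ⌋+1−μ) + ∑_{n ≤ ⌊μ⌋} (⌊μ⌋−n) p_n ), where p* is the shifted Bernoulli distribution with mean μ. -/

import Mathlib

/-- Cumulative distribution function of a pmf on ℕ: `F n = ∑_{m ≤ n} p m`. -/
noncomputable def cdf (p : ℕ → ℝ) (n : ℕ) : ℝ := ∑ m ∈ Finset.range (n + 1), p m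

/-- Wasserstein-1 distance between two pmfs on ℕ, `W1(p,q) = ∑_{n ≥ 0} |F_n - H_n|`. -/
noncomputable def W1 (p q : ℕ → ℝ) : ℝ := ∑' n : ℕ, |cdf p n - cdf q n|

/-- Gini index of a pmf on ℕ with mean μ: `G[p] = (1/(2μ)) ∑_i ∑_j |i-j| p_i p_j`. -/
noncomputable def Gini (μ : ℝ) (p : ℕ → ℝ) : ℝ :=
  (1 / (2 * μ)) * ∑' i : ℕ, ∑' j : ℕ, |(i : ℝ) - (j : ℝ)| * p i * p j

/-- The shifted Bernoulli distribution with mean μ: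
`p*_{⌊μ⌋} = 1 - μ + ⌊μ⌋`, `p*_{⌊μ⌋+1} = μ - ⌊μ⌋`, `p*_n = 0` otherwise. -/
noncomputable def pstar (μ : ℝ) : ℕ → ℝ := fun n =>
  if n = ⌊μ⌋₊ then 1 - μ + (⌊μ⌋₊ : ℝ)
  else if n = ⌊μ⌋₊ + 1 then μ - (⌊μ⌋₊ : ℝ)
  else 0

/-- The Dirac distribution on ℕ concentrated at `k`. -/
noncomputable def dirac (k : ℕ) : ℕ → ℝ := fun n => if n = k then 1 else 0

/-!
Write `F` for the cdf of `p`, `k = ⌊μ⌋₊` and `θ = μ - k`. Counting, for every cut point `n`, the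
pairs separated by it gives `μ G[p] = ∑ₙ F n (1 - F n)`, hence `μ G[p*] = (1 - θ) θ`. Bounding
`F n (1 - F n)` below by `F n (1 - F k)` for `n ≤ k` and by `F k (1 - F n)` for `n > k`, and
eliminating `F k` with the tail-sum formula `∑ₙ (1 - F n) = μ`, leaves
`μ (G[p] - G[p*]) ≥ (1 - θ) T + θ S` with `T = ∑_{n<k} F n ≥ 0` and `S = ∑_{n>k} (1 - F n) ≥ 0`;
the bracket on the right of the claim is exactly `T + S`.
-/

open Finset

theorem HasSum.prod_fiberwise_swap_of_nonneg {α β : Type*} {f : α × β → ℝ} (hf : 0 ≤ f)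
    {r : α → ℝ} {c : β → ℝ} {s : ℝ} (hs : HasSum c s)
    (hr : ∀ a, HasSum (fun b => f (a, b)) (r a))
    (hc : ∀ b, HasSum (fun a => f (a, b)) (c b)) :
    HasSum r s := by
  have hswap : Summable (f ∘ Prod.swap) :=
    (summable_prod_of_nonneg fun x => hf x.swap).mpr ⟨fun b => (hc b).summable,
      by simpa only [Function.comp_apply, Prod.swap_prod_mk, (hc _).tsum_eq] using hs.summable⟩
  have hf_sum : HasSum f s := by
    rw [← (Equiv.prodComm β α).hasSum_iff, hs.unique (hswap.hasSum.prod_fiberwise hc)]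
    exact hswap.hasSum
  exact hf_sum.prod_fiberwise hr

theorem hasSum_ite_of_iff_mem {β α : Type*} [AddCommMonoid α] [TopologicalSpace α]
    {q : β → Prop} [DecidablePred q] (s : Finset β) (hq : ∀ b, q b ↔ b ∈ s) (f : β → α) :
    HasSum (fun b => if q b then f b else 0) (∑ b ∈ s, f b) := by
  rw [← sum_congr rfl fun b hb => if_pos ((hq b).mpr hb)]
  exact hasSum_sum_of_ne_finset_zero fun b hb => if_neg ((hq b).not.mpr hb)

section Cdf

variable {p : ℕ → ℝ}

theorem hasSum_ite_le_cdf (p : ℕ → ℝ) (n : ℕ) :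
    HasSum (fun m => if m ≤ n then p m else 0) (cdf p n) :=
  hasSum_ite_of_iff_mem _ (fun m => by simp) p

theorem hasSum_ite_lt_one_sub_cdf (hsum : HasSum p 1) (n : ℕ) :
    HasSum (fun m => if n < m then p m else 0) (1 - cdf p n) :=
  (hsum.sub (hasSum_ite_le_cdf p n)).congr_fun fun m => by split_ifs <;> first | omega | ring

theorem cdf_nonneg (hpos : ∀ n, 0 ≤ p n) (n : ℕ) : 0 ≤ cdf p n :=
  sum_nonneg fun m _ => hpos m

theorem cdf_le_one (hpos : ∀ n, 0 ≤ p n) (hsum : HasSum p 1) (n : ℕ) : cdf p n ≤ 1 :=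
  sub_nonneg.mp <| (hasSum_ite_lt_one_sub_cdf hsum n).nonneg fun m => by
    split_ifs
    exacts [hpos m, le_rfl]

theorem cdf_mono (hpos : ∀ n, 0 ≤ p n) : Monotone (cdf p) := fun _ _ h =>
  sum_le_sum_of_subset_of_nonneg (range_subset_range.mpr (by omega)) fun m _ _ => hpos m

theorem sum_range_cdf (p : ℕ → ℝ) (N : ℕ) :
    ∑ n ∈ range N, cdf p n = ∑ m ∈ range N, ((N : ℝ) - m) * p m := by
  induction N with
  | zero => simp
  | succ N ih =>
    rw [sum_range_succ, ih, cdf, sum_range_succ, sum_range_succ _ N]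
    simp only [Nat.cast_succ, add_sub_right_comm _ (1 : ℝ), add_mul, one_mul, sum_add_distrib]
    ring

theorem hasSum_one_sub_cdf {μ : ℝ} (hpos : ∀ n, 0 ≤ p n) (hsum : HasSum p 1)
    (hmean : HasSum (fun n : ℕ => (n : ℝ) * p n) μ) : HasSum (fun n => 1 - cdf p n) μ := by
  refine hmean.prod_fiberwise_swap_of_nonneg
    (f := fun x : ℕ × ℕ => if x.1 < x.2 then p x.2 else 0)
    (fun x => by dsimp only; split_ifs; exacts [hpos _, le_rfl])
    (hasSum_ite_lt_one_sub_cdf hsum) fun m => ?_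
  simpa using hasSum_ite_of_iff_mem (range m) (fun n => mem_range.symm) fun _ => p m

theorem tsum_one_sub_cdf_nat_add {μ : ℝ} (hpos : ∀ n, 0 ≤ p n) (hsum : HasSum p 1)
    (hmean : HasSum (fun n : ℕ => (n : ℝ) * p n) μ) (k : ℕ) :
    ∑' n, (1 - cdf p (n + k)) = ∑ n ∈ range k, cdf p n - (k - μ) := by
  have htail := hasSum_one_sub_cdf hpos hsum hmean
  have := htail.summable.sum_add_tsum_nat_add k
  rw [htail.tsum_eq, sum_sub_distrib, sum_const, card_range, nsmul_one] at this
  linarith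

end Cdf

section Gini

variable {p : ℕ → ℝ}

theorem abs_natCast_sub_natCast (i j : ℕ) :
    |(i : ℝ) - j| = ((j - i : ℕ) : ℝ) + ((i - j : ℕ) : ℝ) := by
  rcases le_total i j with h | h
  · rw [abs_of_nonpos (by simpa using h), Nat.cast_sub h, Nat.sub_eq_zero_of_le h]; ring
  · rw [abs_of_nonneg (by simpa using h), Nat.cast_sub h, Nat.sub_eq_zero_of_le h]; ring

theorem hasSum_ite_add_ite_abs_sub (i j : ℕ) :
    HasSum (fun n : ℕ =>
      (if i ≤ n ∧ n < j then (1 : ℝ) else 0) + if j ≤ n ∧ n < i then 1 else 0) |(i : ℝ) - j| := by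
  rw [abs_natCast_sub_natCast]
  simpa using (hasSum_ite_of_iff_mem (Ico i j) (fun n => mem_Ico.symm) fun _ => (1 : ℝ)).add
    (hasSum_ite_of_iff_mem (Ico j i) (fun n => mem_Ico.symm) fun _ => (1 : ℝ))

theorem summable_abs_sub_mul_mul (hp : Summable p) (hpos : ∀ n, 0 ≤ p n)
    (hmean : Summable fun n : ℕ => (n : ℝ) * p n) :
    Summable fun x : ℕ × ℕ => |(x.1 : ℝ) - x.2| * p x.1 * p x.2 := by
  have hmean_nonneg (n : ℕ) : 0 ≤ (n : ℝ) * p n := mul_nonneg n.cast_nonneg (hpos n)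
  refine .of_nonneg_of_le (fun x => by have := hpos x.1; have := hpos x.2; positivity)
    (fun x => ?_) ((hmean.mul_of_nonneg hp hmean_nonneg hpos).add
      (hp.mul_of_nonneg hmean hpos hmean_nonneg))
  have h : |(x.1 : ℝ) - x.2| ≤ x.1 + x.2 := by simpa using abs_sub (x.1 : ℝ) x.2
  have := mul_le_mul_of_nonneg_right h (mul_nonneg (hpos x.1) (hpos x.2))
  linarith

theorem tsum_tsum_abs_sub_mul_mul {μ : ℝ} (hpos : ∀ n, 0 ≤ p n) (hsum : HasSum p 1)
    (hmean : HasSum (fun n : ℕ => (n : ℝ) * p n) μ) :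
    ∑' i : ℕ, ∑' j : ℕ, |(i : ℝ) - j| * p i * p j = 2 * ∑' n, cdf p n * (1 - cdf p n) := by
  set L : ℕ → ℕ → ℝ := fun n i => if i ≤ n then p i else 0
  set R : ℕ → ℕ → ℝ := fun n i => if n < i then p i else 0
  have hL (n : ℕ) : HasSum (L n) (cdf p n) := hasSum_ite_le_cdf p n
  have hR (n : ℕ) : HasSum (R n) (1 - cdf p n) := hasSum_ite_lt_one_sub_cdf hsum n
  have hL_nonneg (n i : ℕ) : 0 ≤ L n i := by dsimp only [L]; split_ifs; exacts [hpos i, le_rfl]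
  have hR_nonneg (n i : ℕ) : 0 ≤ R n i := by dsimp only [R]; split_ifs; exacts [hpos i, le_rfl]
  have hsep (n : ℕ) : HasSum (fun x : ℕ × ℕ => L n x.1 * R n x.2 + R n x.1 * L n x.2)
      (2 * (cdf p n * (1 - cdf p n))) := by
    have := ((hL n).mul (hR n) ((hL n).summable.mul_of_nonneg (hR n).summable (hL_nonneg n)
      (hR_nonneg n))).add ((hR n).mul (hL n) ((hR n).summable.mul_of_nonneg (hL n).summable
        (hR_nonneg n) (hL_nonneg n)))
    rwa [mul_comm (1 - cdf p n), ← two_mul] at this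
  have hcount (x : ℕ × ℕ) : HasSum (fun n => L n x.1 * R n x.2 + R n x.1 * L n x.2)
      (|(x.1 : ℝ) - x.2| * p x.1 * p x.2) := by
    rw [mul_assoc]
    refine ((hasSum_ite_add_ite_abs_sub x.1 x.2).mul_right _).congr_fun fun n => ?_
    dsimp only [L, R]
    split_ifs <;> first | omega | ring
  have habs := summable_abs_sub_mul_mul hsum.summable hpos hmean.summable
  have := habs.hasSum.prod_fiberwise_swap_of_nonneg
    (f := fun y : ℕ × (ℕ × ℕ) => L y.1 y.2.1 * R y.1 y.2.2 + R y.1 y.2.1 * L y.1 y.2.2)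
    (fun y => add_nonneg (mul_nonneg (hL_nonneg _ _) (hR_nonneg _ _))
      (mul_nonneg (hR_nonneg _ _) (hL_nonneg _ _))) hsep hcount
  rw [← habs.tsum_prod' habs.prod_factor, ← this.tsum_eq, tsum_mul_left]

theorem mul_gini_eq_tsum_cdf_mul {μ : ℝ} (hμ : μ ≠ 0) (hpos : ∀ n, 0 ≤ p n)
    (hsum : HasSum p 1) (hmean : HasSum (fun n : ℕ => (n : ℝ) * p n) μ) :
    μ * Gini μ p = ∑' n, cdf p n * (1 - cdf p n) := by
  rw [Gini, tsum_tsum_abs_sub_mul_mul hpos hsum hmean]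
  field_simp

end Gini

section ShiftedBernoulli

variable {μ : ℝ}

theorem pstar_eq_zero {n : ℕ} (h₀ : n ≠ ⌊μ⌋₊) (h₁ : n ≠ ⌊μ⌋₊ + 1) : pstar μ n = 0 := by
  simp [pstar, h₀, h₁]

theorem pstar_nonneg (hμ : 0 ≤ μ) (n : ℕ) : 0 ≤ pstar μ n := by
  have := Nat.floor_le hμ
  have := Nat.lt_floor_add_one μ
  unfold pstar
  split_ifs <;> linarith

theorem hasSum_mul_pstar (g : ℕ → ℝ) : HasSum (fun n => g n * pstar μ n)
    (g ⌊μ⌋₊ * (1 - μ + ⌊μ⌋₊) + g (⌊μ⌋₊ + 1) * (μ - ⌊μ⌋₊)) := by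
  have : HasSum (fun n => g n * pstar μ n) (∑ n ∈ {⌊μ⌋₊, ⌊μ⌋₊ + 1}, g n * pstar μ n) :=
    hasSum_sum_of_ne_finset_zero fun n hn => by
      simp only [mem_insert, mem_singleton, not_or] at hn
      rw [pstar_eq_zero hn.1 hn.2, mul_zero]
  simpa [pstar] using this

theorem hasSum_pstar : HasSum (pstar μ) 1 := by
  simpa using hasSum_mul_pstar (μ := μ) fun _ => 1

theorem hasSum_natCast_mul_pstar : HasSum (fun n : ℕ => (n : ℝ) * pstar μ n) μ := by
  convert hasSum_mul_pstar (μ := μ) Nat.cast using 1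
  push_cast
  ring

theorem cdf_pstar_of_lt {n : ℕ} (h : n < ⌊μ⌋₊) : cdf (pstar μ) n = 0 :=
  sum_eq_zero fun m hm => pstar_eq_zero (by simp at hm; omega) (by simp at hm; omega)

theorem cdf_pstar_floor : cdf (pstar μ) ⌊μ⌋₊ = 1 - μ + ⌊μ⌋₊ := by
  rw [cdf, sum_range_succ, sum_eq_zero fun m hm => pstar_eq_zero (by simp at hm; omega)
    (by simp at hm; omega)]
  simp [pstar]

theorem cdf_pstar_of_floor_lt {n : ℕ} (h : ⌊μ⌋₊ < n) : cdf (pstar μ) n = 1 := by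
  rw [cdf, ← sum_subset (s₁ := {⌊μ⌋₊, ⌊μ⌋₊ + 1}) (by intro m; simp; omega) fun m _ hm => by
    simp only [mem_insert, mem_singleton, not_or] at hm
    exact pstar_eq_zero hm.1 hm.2]
  simp [pstar]

theorem mul_gini_pstar (hμ : 0 < μ) :
    μ * Gini μ (pstar μ) = (1 - μ + ⌊μ⌋₊) * (μ - ⌊μ⌋₊) := by
  rw [mul_gini_eq_tsum_cdf_mul hμ.ne' (pstar_nonneg hμ.le) hasSum_pstar
    hasSum_natCast_mul_pstar, tsum_eq_single ⌊μ⌋₊ fun n hn => ?_, cdf_pstar_floor]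
  · ring
  · rcases lt_or_gt_of_ne hn with h | h
    · simp [cdf_pstar_of_lt h]
    · simp [cdf_pstar_of_floor_lt h]

end ShiftedBernoulli

theorem le_tsum_mul_one_sub_of_monotone {F : ℕ → ℝ} (hF : Monotone F) (h₀ : ∀ n, 0 ≤ F n)
    (h₁ : ∀ n, F n ≤ 1) (hs : Summable fun n => 1 - F n) (k : ℕ) :
    (1 - F k) * ∑ n ∈ range (k + 1), F n + F k * ∑' n, (1 - F (n + (k + 1))) ≤
      ∑' n, F n * (1 - F n) := by
  have hs' : Summable fun n => F n * (1 - F n) :=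
    hs.of_nonneg_of_le (fun n => mul_nonneg (h₀ n) (sub_nonneg.2 (h₁ n)))
      fun n => mul_le_of_le_one_left (sub_nonneg.2 (h₁ n)) (h₁ n)
  rw [← hs'.sum_add_tsum_nat_add (k + 1), mul_sum, ← tsum_mul_left]
  have hs_tail : Summable fun n => 1 - F (n + (k + 1)) :=
    (summable_nat_add_iff (f := fun n => 1 - F n) (k + 1)).mpr hs
  have hs'_tail : Summable fun n => F (n + (k + 1)) * (1 - F (n + (k + 1))) :=
    (summable_nat_add_iff (f := fun n => F n * (1 - F n)) (k + 1)).mpr hs'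
  refine add_le_add (sum_le_sum fun n hn => ?_)
    (Summable.tsum_le_tsum (fun n => ?_) (hs_tail.mul_left (F k)) hs'_tail)
  · rw [mul_comm]
    have := hF (Nat.lt_succ_iff.mp (mem_range.mp hn))
    exact mul_le_mul_of_nonneg_left (by linarith) (h₀ n)
  · exact mul_le_mul_of_nonneg_right (hF (by omega)) (sub_nonneg.2 (h₁ _))

theorem stmt_15_general (μ : ℝ) (hμ : 0 < μ) (p : ℕ → ℝ)
    (hpos : ∀ n, 0 ≤ p n) (hsum : HasSum p 1)
    (hmean : HasSum (fun n : ℕ => (n : ℝ) * p n) μ) :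
    μ * (Gini μ p - Gini μ (pstar μ)) ≥
      min (μ - (⌊μ⌋₊ : ℝ)) ((⌊μ⌋₊ : ℝ) + 1 - μ) *
        (((∑ n ∈ Finset.range (⌊μ⌋₊ + 1), ((⌊μ⌋₊ : ℝ) + 1 - (n : ℝ)) * p n) -
            ((⌊μ⌋₊ : ℝ) + 1 - μ)) +
          ∑ n ∈ Finset.range (⌊μ⌋₊ + 1), ((⌊μ⌋₊ : ℝ) - (n : ℝ)) * p n) := by
  set k := ⌊μ⌋₊
  set T := ∑ n ∈ range k, cdf p n
  set S := ∑' n, (1 - cdf p (n + (k + 1))) with hS_def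
  have hS : S = T + cdf p k - (k + 1 - μ) := by
    rw [hS_def, tsum_one_sub_cdf_nat_add hpos hsum hmean, sum_range_succ, Nat.cast_succ]
  have hT_nonneg : 0 ≤ T := sum_nonneg fun n _ => cdf_nonneg hpos n
  have hS_nonneg : 0 ≤ S := tsum_nonneg fun n => sub_nonneg.2 (cdf_le_one hpos hsum _)
  have hlower := le_tsum_mul_one_sub_of_monotone (cdf_mono hpos) (cdf_nonneg hpos)
    (cdf_le_one hpos hsum) (hasSum_one_sub_cdf hpos hsum hmean).summable k
  rw [sum_range_succ] at hlower
  have hweights : (∑ n ∈ range (k + 1), ((k : ℝ) + 1 - n) * p n - (k + 1 - μ)) +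
      ∑ n ∈ range (k + 1), ((k : ℝ) - n) * p n = T + S := by
    rw [hS, sum_range_succ (fun n => ((k : ℝ) - n) * p n), sub_self, zero_mul, add_zero,
      ← sum_range_cdf, ← Nat.cast_succ, ← sum_range_cdf, sum_range_succ]
    ring
  rw [ge_iff_le, mul_sub, mul_gini_eq_tsum_cdf_mul hμ.ne' hpos hsum hmean, mul_gini_pstar hμ,
    hweights]
  calc min (μ - k) (k + 1 - μ) * (T + S) ≤ (k + 1 - μ) * T + (μ - k) * S := by
        rw [mul_add]
        gcongr
        exacts [min_le_right _ _, min_le_left _ _]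
    _ = (1 - cdf p k) * (T + cdf p k) + cdf p k * S - (1 - μ + k) * (μ - k) := by rw [hS]; ring
    _ ≤ _ := by linarith

theorem stmt_15 (μ : ℝ) (hμ : 0 < μ) (hni : ∀ n : ℕ, μ ≠ (n : ℝ)) (p : ℕ → ℝ)
    (hpos : ∀ n, 0 ≤ p n) (hsum : HasSum p 1)
    (hmean : HasSum (fun n : ℕ => (n : ℝ) * p n) μ) :
    μ * (Gini μ p - Gini μ (pstar μ)) ≥
      min (μ - (⌊μ⌋₊ : ℝ)) ((⌊μ⌋₊ : ℝ) + 1 - μ) *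
        (((∑ n ∈ Finset.range (⌊μ⌋₊ + 1), ((⌊μ⌋₊ : ℝ) + 1 - (n : ℝ)) * p n) -
            ((⌊μ⌋₊ : ℝ) + 1 - μ)) +
          ∑ n ∈ Finset.range (⌊μ⌋₊ + 1), ((⌊μ⌋₊ : ℝ) - (n : ℝ)) * p n) :=
  stmt_15_general μ hμ p hpos hsum hmean
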